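/- Admissibility of the case rule in atomic system F (Fat): if Γ ⊢ M : A ∨̂ B, Γ, x:A ⊢ P : C, and Γ, y:B ⊢ Q : C, all in Fat (system F where universal instantiation MY is restricted to atomic types Y), then Γ ⊢ CASE(M, x:A.P, y:B.Q, C) : C in Fat, where CASE is defined by recursion on C (atomic instantiation at atomic C, pairing at conjunctions, λ-abstraction at implications, Λ-abstraction at quantifications). -/
import Mathlib


inductive Ty : Type
  | var : ℕ → Ty
  | imp : Ty → Ty → Ty
  | conj : Ty → Ty → Ty
  | all : Ty → Ty
  deriving DecidableEq

namespace Ty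

/-- Shift (by one) the free type variables of a type at or above cutoff `c` (de Bruijn). -/
def shift (c : ℕ) : Ty → Ty
  | var n => if n < c then var n else var (n + 1)
  | imp a b => imp (a.shift c) (b.shift c)
  | conj a b => conj (a.shift c) (b.shift c)
  | all a => all (a.shift (c + 1))

/-- Capture-avoiding substitution of `B` for type variable `d` (de Bruijn). -/
def subst : Ty → ℕ → Ty → Ty
  | var n, d, B => if n < d then var n else if n = d then (Ty.shift 0)^[d] B else var (n - 1)
  | imp a b, d, B => imp (a.subst d B) (b.subst d B)
  | conj a b, d, B => conj (a.subst d B) (b.subst d B)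
  | all a, d, B => all (a.subst (d + 1) B)

/-- Russell–Prawitz disjunction `A ∨̂ B := ∀X.((A ⊃ X) ∧ (B ⊃ X)) ⊃ X`. -/
def orr (A B : Ty) : Ty :=
  all (imp (conj (imp (A.shift 0) (var 0)) (imp (B.shift 0) (var 0))) (var 0))

/-- Russell–Prawitz absurdity `⊥̂ := ∀X.X`. -/
def bot : Ty := all (var 0)

end Ty

inductive Tm : Type
  | var : ℕ → Tm
  | lam : Ty → Tm → Tm
  | app : Tm → Tm → Tm
  | pair : Tm → Tm → Tm
  | proj1 : Tm → Tm
  | proj2 : Tm → Tm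
  | tlam : Tm → Tm
  | tapp : Tm → Ty → Tm

namespace Tm

/-- Shift the free term variables at or above cutoff `c`. -/
def shiftVar (c : ℕ) : Tm → Tm
  | var n => if n < c then var n else var (n + 1)
  | lam A M => lam A (M.shiftVar (c + 1))
  | app M N => app (M.shiftVar c) (N.shiftVar c)
  | pair M N => pair (M.shiftVar c) (N.shiftVar c)
  | proj1 M => proj1 (M.shiftVar c)
  | proj2 M => proj2 (M.shiftVar c)
  | tlam M => tlam (M.shiftVar c)
  | tapp M B => tapp (M.shiftVar c) B

/-- Shift the free type variables (in types occurring in a term) at or above cutoff `c`. -/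
def shiftTy (c : ℕ) : Tm → Tm
  | var n => var n
  | lam A M => lam (A.shift c) (M.shiftTy c)
  | app M N => app (M.shiftTy c) (N.shiftTy c)
  | pair M N => pair (M.shiftTy c) (N.shiftTy c)
  | proj1 M => proj1 (M.shiftTy c)
  | proj2 M => proj2 (M.shiftTy c)
  | tlam M => tlam (M.shiftTy (c + 1))
  | tapp M B => tapp (M.shiftTy c) (B.shift c)

/-- Swap the term variables `c` and `c+1`. -/
def swapVar (c : ℕ) : Tm → Tm
  | var n => if n = c then var (c + 1) else if n = c + 1 then var c else var n
  | lam A M => lam A (M.swapVar (c + 1))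
  | app M N => app (M.swapVar c) (N.swapVar c)
  | pair M N => pair (M.swapVar c) (N.swapVar c)
  | proj1 M => proj1 (M.swapVar c)
  | proj2 M => proj2 (M.swapVar c)
  | tlam M => tlam (M.swapVar c)
  | tapp M B => tapp (M.swapVar c) B

/-- Capture-avoiding substitution of term `N` for term variable `d`. -/
def substVar : Tm → ℕ → Tm → Tm
  | var n, d, N => if n < d then var n else if n = d then (Tm.shiftVar 0)^[d] N else var (n - 1)
  | lam A M, d, N => lam A (M.substVar (d + 1) N)
  | app M P, d, N => app (M.substVar d N) (P.substVar d N)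
  | pair M P, d, N => pair (M.substVar d N) (P.substVar d N)
  | proj1 M, d, N => proj1 (M.substVar d N)
  | proj2 M, d, N => proj2 (M.substVar d N)
  | tlam M, d, N => tlam (M.substVar d (N.shiftTy 0))
  | tapp M B, d, N => tapp (M.substVar d N) B

/-- Capture-avoiding substitution of type `B` for type variable `d` in a term. -/
def substTy : Tm → ℕ → Ty → Tm
  | var n, _, _ => var n
  | lam A M, d, B => lam (A.subst d B) (M.substTy d B)
  | app M N, d, B => app (M.substTy d B) (N.substTy d B)
  | pair M N, d, B => pair (M.substTy d B) (N.substTy d B)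
  | proj1 M, d, B => proj1 (M.substTy d B)
  | proj2 M, d, B => proj2 (M.substTy d B)
  | tlam M, d, B => tlam (M.substTy (d + 1) B)
  | tapp M C, d, B => tapp (M.substTy d B) (C.subst d B)

end Tm

/-- The Fat case-elimination `CASE(M, x:A.P, y:B.Q, C)`, by recursion on `C`,
using only atomic universal instantiations of `M`. -/
def CASE (M : Tm) (A : Ty) (P : Tm) (B : Ty) (Q : Tm) : Ty → Tm
  | .var n => .app (.tapp M (.var n)) (.pair (.lam A P) (.lam B Q))
  | .imp C₁ C₂ =>
      .lam C₁ (CASE (M.shiftVar 0) A (.app (P.shiftVar 1) (.var 1))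
        B (.app (Q.shiftVar 1) (.var 1)) C₂)
  | .conj C₁ C₂ =>
      .pair (CASE M A (.proj1 P) B (.proj1 Q) C₁) (CASE M A (.proj2 P) B (.proj2 Q) C₂)
  | .all C₀ =>
      .tlam (CASE (M.shiftTy 0) (A.shift 0) (.tapp (P.shiftTy 0) (.var 0))
        (B.shift 0) (.tapp (Q.shiftTy 0) (.var 0)) C₀)

/-- Typing judgment of atomic system F (Fat): as system F, but universal
instantiation is restricted to atomic types (type variables). -/
inductive TypingAt : List Ty → Tm → Ty → Prop
  | var {Γ n A} : Γ[n]? = some A → TypingAt Γ (.var n) A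
  | lam {Γ A M B} : TypingAt (A :: Γ) M B → TypingAt Γ (.lam A M) (.imp A B)
  | app {Γ M N A B} : TypingAt Γ M (.imp A B) → TypingAt Γ N A → TypingAt Γ (.app M N) B
  | pair {Γ M N A B} : TypingAt Γ M A → TypingAt Γ N B → TypingAt Γ (.pair M N) (.conj A B)
  | proj1 {Γ M A B} : TypingAt Γ M (.conj A B) → TypingAt Γ (.proj1 M) A
  | proj2 {Γ M A B} : TypingAt Γ M (.conj A B) → TypingAt Γ (.proj2 M) B
  | tlam {Γ M A} : TypingAt (Γ.map (Ty.shift 0)) M A → TypingAt Γ (.tlam M) (.all A)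
  | tapp {Γ M A} (n : ℕ) :
      TypingAt Γ M (.all A) → TypingAt Γ (.tapp M (.var n)) (A.subst 0 (.var n))

theorem Ty.shift_shift (T : Ty) : ∀ c c', c' ≤ c →
    (T.shift c).shift c' = (T.shift c').shift (c + 1) := by
  induction T with
  | var n =>
      intro c c' h
      simp only [Ty.shift]
      by_cases h1 : n < c
      · rw [if_pos h1]
        by_cases h2 : n < c'
        · simp only [Ty.shift, if_pos h2, if_pos (by omega : n < c + 1)]
        · simp only [Ty.shift, if_neg h2, if_pos (by omega : n + 1 < c + 1)]
      · rw [if_neg h1]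
        simp only [Ty.shift, if_neg (by omega : ¬ n + 1 < c'), if_neg (by omega : ¬ n < c'),
          if_neg (by omega : ¬ n + 1 < c + 1)]
  | imp a b iha ihb => intro c c' h; simp [Ty.shift, iha _ _ h, ihb _ _ h]
  | conj a b iha ihb => intro c c' h; simp [Ty.shift, iha _ _ h, ihb _ _ h]
  | all a ih => intro c c' h; simp [Ty.shift, ih (c+1) (c'+1) (by omega)]

theorem Ty.iterate_shift_shift (d : ℕ) : ∀ (c : ℕ) (B : Ty),
    (Ty.shift 0)^[d] (B.shift c) = ((Ty.shift 0)^[d] B).shift (c + d) := by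
  induction d with
  | zero => intro c B; simp
  | succ d ih =>
      intro c B
      rw [Function.iterate_succ_apply, Function.iterate_succ_apply,
        Ty.shift_shift B c 0 (Nat.zero_le _), ih (c+1) (B.shift 0)]
      congr 1; omega

theorem Ty.shift_subst (A : Ty) : ∀ d c B, d ≤ c →
    (A.subst d B).shift c = (A.shift (c + 1)).subst d (B.shift (c - d)) := by
  induction A with
  | var n =>
      intro d c B h
      simp only [Ty.subst, Ty.shift]
      rcases lt_trichotomy n d with h1 | h1 | h1
      · simp only [if_pos h1, Ty.shift, if_pos (by omega : n < c),
          if_pos (by omega : n < c + 1), Ty.subst, if_pos h1]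
      · subst h1
        simp only [if_neg (lt_irrefl _), if_pos rfl, if_pos (by omega : n < c + 1),
          Ty.subst, if_neg (lt_irrefl _), if_pos rfl]
        rw [Ty.iterate_shift_shift]
        congr 1; omega
      · simp only [if_neg (by omega : ¬ n < d), if_neg (by omega : n ≠ d)]
        by_cases h2 : n - 1 < c
        · simp only [Ty.shift, if_pos h2, if_pos (by omega : n < c + 1), Ty.subst,
            if_neg (by omega : ¬ n < d), if_neg (by omega : n ≠ d)]
        · simp only [Ty.shift, if_neg h2, if_neg (by omega : ¬ n < c + 1), Ty.subst,
            if_neg (by omega : ¬ n + 1 < d), if_neg (by omega : n + 1 ≠ d)]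
          congr 1
          omega
  | imp a b iha ihb => intro d c B h; simp [Ty.subst, Ty.shift, iha _ _ _ h, ihb _ _ _ h]
  | conj a b iha ihb => intro d c B h; simp [Ty.subst, Ty.shift, iha _ _ _ h, ihb _ _ _ h]
  | all a ih =>
      intro d c B h
      simp only [Ty.subst, Ty.shift, all.injEq]
      rw [ih (d+1) (c+1) B (by omega)]
      congr 2; omega

theorem Ty.subst_shift (A : Ty) : ∀ c B, (A.shift c).subst c B = A := by
  induction A with
  | var n =>
      intro c B
      simp only [Ty.shift]
      split
      · simp only [Ty.subst]; rw [if_pos ‹_›]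
      · simp only [Ty.subst, if_neg (by omega : ¬ n + 1 < c),
          if_neg (by omega : n + 1 ≠ c)]
        simp
  | imp a b iha ihb => intro c B; simp [Ty.shift, Ty.subst, iha, ihb]
  | conj a b iha ihb => intro c B; simp [Ty.shift, Ty.subst, iha, ihb]
  | all a ih => intro c B; simp [Ty.shift, Ty.subst, ih]

theorem Ty.iterate_shift_var (d : ℕ) : (Ty.shift 0)^[d] (Ty.var 0) = Ty.var d := by
  induction d with
  | zero => simp
  | succ d ih =>
      rw [Function.iterate_succ_apply']
      rw [ih]
      simp [Ty.shift]

theorem Ty.subst_shift_var (A : Ty) : ∀ c, (A.shift (c + 1)).subst c (.var 0) = A := by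
  induction A with
  | var n =>
      intro c
      simp only [Ty.shift]
      split
      · by_cases h : n < c
        · simp only [Ty.subst, if_pos h]
        · have : n = c := by omega
          subst this
          simp [Ty.subst, Ty.iterate_shift_var]
      · simp only [Ty.subst, if_neg (by omega : ¬ n + 1 < c),
          if_neg (by omega : n + 1 ≠ c)]
        simp
  | imp a b iha ihb => intro c; simp [Ty.shift, Ty.subst, iha, ihb]
  | conj a b iha ihb => intro c; simp [Ty.shift, Ty.subst, iha, ihb]
  | all a ih => intro c; simp [Ty.shift, Ty.subst, ih]

theorem TypingAt.weaken_var {Δ : List Ty} {M : Tm} {T : Ty} (h : TypingAt Δ M T) :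
    ∀ Γ₁ Γ₂ D, Δ = Γ₁ ++ Γ₂ →
      TypingAt (Γ₁ ++ D :: Γ₂) (M.shiftVar Γ₁.length) T := by
  induction h with
  | @var Δ n T hget =>
      intro Γ₁ Γ₂ D hΔ; subst hΔ
      simp only [Tm.shiftVar]
      split
      · rename_i h
        refine .var ?_
        rw [List.getElem?_append_left h] at hget
        rw [List.getElem?_append_left h, hget]
      · rename_i h
        refine .var ?_
        rw [List.getElem?_append_right (by omega)] at hget
        rw [List.getElem?_append_right (by omega)]
        have : n + 1 - Γ₁.length = (n - Γ₁.length) + 1 := by omega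
        rw [this, List.getElem?_cons_succ, hget]
  | @lam Γ A M B hM ih =>
      intro Γ₁ Γ₂ D hΔ
      exact .lam (ih (A :: Γ₁) Γ₂ D (by simp [hΔ]))
  | app hM hN ihM ihN =>
      intro Γ₁ Γ₂ D hΔ
      exact .app (ihM _ _ _ hΔ) (ihN _ _ _ hΔ)
  | pair hM hN ihM ihN =>
      intro Γ₁ Γ₂ D hΔ
      exact .pair (ihM _ _ _ hΔ) (ihN _ _ _ hΔ)
  | proj1 hM ih => intro Γ₁ Γ₂ D hΔ; exact .proj1 (ih _ _ _ hΔ)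
  | proj2 hM ih => intro Γ₁ Γ₂ D hΔ; exact .proj2 (ih _ _ _ hΔ)
  | @tlam Γ M A hM ih =>
      intro Γ₁ Γ₂ D hΔ
      refine .tlam ?_
      have := ih (Γ₁.map (Ty.shift 0)) (Γ₂.map (Ty.shift 0)) (D.shift 0)
        (by simp [hΔ])
      simpa using this
  | tapp n hM ih => intro Γ₁ Γ₂ D hΔ; exact .tapp n (ih _ _ _ hΔ)

theorem TypingAt.weaken_ty {Γ : List Ty} {M : Tm} {T : Ty} (h : TypingAt Γ M T) :
    ∀ c, TypingAt (Γ.map (Ty.shift c)) (M.shiftTy c) (T.shift c) := by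
  induction h with
  | @var Γ n T hget =>
      intro c
      exact .var (by rw [List.getElem?_map, hget]; rfl)
  | lam hM ih => intro c; exact .lam (ih c)
  | app hM hN ihM ihN => intro c; exact .app (ihM c) (ihN c)
  | pair hM hN ihM ihN => intro c; exact .pair (ihM c) (ihN c)
  | proj1 hM ih => intro c; exact .proj1 (ih c)
  | proj2 hM ih => intro c; exact .proj2 (ih c)
  | @tlam Γ M A hM ih =>
      intro c
      refine .tlam ?_
      have := ih (c + 1)
      simp only [List.map_map] at this ⊢
      have heq : (Ty.shift 0 ∘ Ty.shift c) = (Ty.shift (c + 1) ∘ Ty.shift 0) := by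
        funext T; exact Ty.shift_shift T c 0 (Nat.zero_le _)
      rw [heq]
      exact this
  | @tapp Γ M A n hM ih =>
      intro c
      have h1 := Ty.shift_subst A 0 c (Ty.var n) (Nat.zero_le _)
      simp only [Nat.sub_zero] at h1
      simp only [Tm.shiftTy, h1]
      by_cases h : n < c
      · have : (Ty.var n).shift c = Ty.var n := by simp [Ty.shift, h]
        rw [this]
        exact .tapp n (by have := ih c; simpa [Ty.shift] using this)
      · have : (Ty.var n).shift c = Ty.var (n + 1) := by simp [Ty.shift, h]
        rw [this]
        exact .tapp (n + 1) (by have := ih c; simpa [Ty.shift] using this)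

/-- Admissibility of the case rule in atomic system F (Fat): if `Γ ⊢ M : A ∨̂ B`,
`Γ,x:A ⊢ P : C` and `Γ,y:B ⊢ Q : C` in Fat, then `Γ ⊢ CASE(M,x:A.P,y:B.Q,C) : C` in Fat. -/
theorem fat_case_admissible {Γ : List Ty} {M P Q : Tm} {A B C : Ty}
    (hM : TypingAt Γ M (Ty.orr A B))
    (hP : TypingAt (A :: Γ) P C) (hQ : TypingAt (B :: Γ) Q C) :
    TypingAt Γ (CASE M A P B Q C) C := by
  induction C generalizing Γ M P Q A B with
  | var n =>
      have h := TypingAt.tapp n hM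
      simp only [Ty.orr, Ty.subst, Ty.subst_shift] at h
      norm_num [Ty.subst] at h
      exact .app h (.pair (.lam hP) (.lam hQ))
  | imp C₁ C₂ ih₁ ih₂ =>
      refine .lam (ih₂ ?_ ?_ ?_)
      · exact hM.weaken_var [] Γ C₁ rfl
      · exact .app (hP.weaken_var [A] Γ C₁ rfl) (.var (by simp))
      · exact .app (hQ.weaken_var [B] Γ C₁ rfl) (.var (by simp))
  | conj C₁ C₂ ih₁ ih₂ =>
      exact .pair (ih₁ hM (.proj1 hP) (.proj1 hQ)) (ih₂ hM (.proj2 hP) (.proj2 hQ))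
  | all C₀ ih =>
      refine .tlam (ih ?_ ?_ ?_)
      · have := hM.weaken_ty 0
        have horr : (Ty.orr A B).shift 0 = Ty.orr (A.shift 0) (B.shift 0) := by
          simp [Ty.orr, Ty.shift, Ty.shift_shift A 0 0 (Nat.zero_le _),
            Ty.shift_shift B 0 0 (Nat.zero_le _)]
        rwa [horr] at this
      · have := hP.weaken_ty 0
        simp only [List.map_cons, Ty.shift] at this
        have h := TypingAt.tapp 0 this
        rwa [Ty.subst_shift_var] at h
      · have := hQ.weaken_ty 0
        simp only [List.map_cons, Ty.shift] at this
        have h := TypingAt.tapp 0 this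
        rwa [Ty.subst_shift_var] at h
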